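/- For real α ≥ 0, the integral (1/√(2π)) ∫₀¹ (1 − x^α·c(x) − (1−x)^α·c(1−x))·(x(1−x))^{−3/2} dx equals 2√2·α·Γ(3/2 + α)/Γ(2 + α), where c(x) = x²(3 − 2x). -/

import Mathlib

open Real

/-- The limiting split function `c(x) = x²(3-2x)`. -/
def cfun (x : ℝ) : ℝ := x ^ 2 * (3 - 2 * x)

/-!
Since `c(x) + c(1 - x) = 1`, the integrand is `g(x) + g(1 - x)` with
`g(x) = (1 - x^α) c(x) (x(1-x))^(-3/2)`, so the integral is `2 ∫ g`. Writing
`3 - 2x = 1 + 2(1 - x)` splits `g` into `(x^(1/2) - x^(1/2+α)) (1-x)^(b-1)` for `b = -1/2` and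
`b = 1/2`. For `-1 < b`, `b ≠ 0`, integrating `d/dx [(x^s - x^t) (1-x)^b]` over `(0, 1)` gives
zero and turns `∫ (x^s - x^t) (1-x)^(b-1)` into Beta integrals: it equals
`Γ(b) (Γ(s+1)/Γ(s+b+1) - Γ(t+1)/Γ(t+b+1))`, the continuation of `B(s+1, b) - B(t+1, b)` to
`-1 < b < 0`. The boundary terms vanish because `0 ≤ x^s - x^t ≤ (t - s + 1)(1 - x)`.
-/

open MeasureTheory Set Filter Topology

lemma intervalIntegrable_rpow_mul_one_sub_rpow {p q : ℝ} (hp : -1 < p) (hq : -1 < q) :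
    IntervalIntegrable (fun x : ℝ ↦ x ^ p * (1 - x) ^ q) volume 0 1 := by
  have hleft : IntervalIntegrable (fun x : ℝ ↦ x ^ p * (1 - x) ^ q) volume 0 (1 / 2) := by
    refine (intervalIntegral.intervalIntegrable_rpow' hp).mul_continuousOn
      (ContinuousOn.rpow_const (by fun_prop) fun x hx ↦ Or.inl ?_)
    rw [uIcc_of_le (by norm_num)] at hx
    linarith [hx.2]
  have hright : IntervalIntegrable (fun x : ℝ ↦ x ^ p * (1 - x) ^ q) volume (1 / 2) 1 := by
    have h := ((intervalIntegral.intervalIntegrable_rpow' hq (a := 0) (b := 1 / 2)).comp_sub_left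
      1).symm
    norm_num at h
    refine h.continuousOn_mul (ContinuousOn.rpow_const (by fun_prop) fun x hx ↦ Or.inl ?_)
    rw [uIcc_of_le (by norm_num)] at hx
    linarith [hx.1]
  exact hleft.trans hright

lemma integrableOn_rpow_mul_one_sub_rpow {p q : ℝ} (hp : -1 < p) (hq : -1 < q) :
    IntegrableOn (fun x : ℝ ↦ x ^ p * (1 - x) ^ q) (Ioo 0 1) :=
  (intervalIntegrable_iff_integrableOn_Ioo_of_le zero_le_one).1
    (intervalIntegrable_rpow_mul_one_sub_rpow hp hq)

lemma integral_rpow_mul_one_sub_rpow {a b : ℝ} (ha : 0 < a) (hb : 0 < b) :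
    ∫ x in Ioo (0 : ℝ) 1, x ^ (a - 1) * (1 - x) ^ (b - 1) =
      Gamma a * Gamma b / Gamma (a + b) := by
  have hbeta : Complex.betaIntegral a b =
      ↑(∫ x in Ioo (0 : ℝ) 1, x ^ (a - 1) * (1 - x) ^ (b - 1)) := by
    rw [← integral_Ioc_eq_integral_Ioo, ← intervalIntegral.integral_of_le zero_le_one,
      Complex.betaIntegral, ← intervalIntegral.integral_ofReal]
    refine intervalIntegral.integral_congr fun x hx ↦ ?_
    rw [uIcc_of_le zero_le_one] at hx
    simp only [Complex.ofReal_mul, Complex.ofReal_cpow hx.1,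
      Complex.ofReal_cpow (sub_nonneg.2 hx.2), Complex.ofReal_sub, Complex.ofReal_one]
  have h := Complex.betaIntegral_eq_Gamma_mul_div a b (by simpa using ha) (by simpa using hb)
  rw [hbeta, ← Complex.ofReal_add, Complex.Gamma_ofReal, Complex.Gamma_ofReal,
    Complex.Gamma_ofReal] at h
  exact_mod_cast h

lemma one_sub_rpow_le {x r : ℝ} (hx0 : 0 < x) (hx1 : x ≤ 1) (hr : 0 ≤ r) :
    1 - x ^ r ≤ (r + 1) * (1 - x) := by
  rcases le_total r 1 with h | h
  · have : x ^ (1 : ℝ) ≤ x ^ r := rpow_le_rpow_of_exponent_ge hx0 hx1 h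
    rw [rpow_one] at this
    nlinarith
  · have := one_add_mul_self_le_rpow_one_add (s := x - 1) (by linarith) h
    rw [add_sub_cancel] at this
    nlinarith

lemma rpow_sub_rpow_le {x s t : ℝ} (hx0 : 0 < x) (hx1 : x ≤ 1) (hs : 0 ≤ s) (hst : s ≤ t) :
    x ^ s - x ^ t ≤ (t - s + 1) * (1 - x) := by
  have hxs : x ^ s ≤ 1 := rpow_le_one hx0.le hx1 hs
  have hdiff : 0 ≤ 1 - x ^ (t - s) := sub_nonneg.2 (rpow_le_one hx0.le hx1 (by linarith))
  have hbound := one_sub_rpow_le hx0 hx1 (sub_nonneg.2 hst)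
  calc x ^ s - x ^ t = x ^ s * (1 - x ^ (t - s)) := by
        rw [mul_sub, mul_one, ← rpow_add hx0, add_sub_cancel]
    _ ≤ 1 * (1 - x ^ (t - s)) := mul_le_mul_of_nonneg_right hxs hdiff
    _ ≤ (t - s + 1) * (1 - x) := by linarith

lemma integrableOn_rpow_sub_rpow_mul_one_sub_rpow {s t b : ℝ} (hs : 0 ≤ s) (hst : s ≤ t)
    (hb : -1 < b) :
    IntegrableOn (fun x : ℝ ↦ (x ^ s - x ^ t) * (1 - x) ^ (b - 1)) (Ioo 0 1) := by
  have hdom : IntegrableOn (fun x : ℝ ↦ (t - s + 1) * (1 - x) ^ b) (Ioo 0 1) := by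
    simpa [IntegrableOn] using
      (integrableOn_rpow_mul_one_sub_rpow (p := 0) (by norm_num) hb).const_mul (t - s + 1)
  refine hdom.mono' (by fun_prop) ((ae_restrict_iff' measurableSet_Ioo).2 (ae_of_all _ ?_))
  rintro x ⟨hx0, hx1⟩
  have h1x : 0 < 1 - x := by linarith
  have hnonneg : 0 ≤ x ^ s - x ^ t := sub_nonneg.2 (rpow_le_rpow_of_exponent_ge hx0 hx1.le hst)
  rw [norm_of_nonneg (by positivity)]
  calc (x ^ s - x ^ t) * (1 - x) ^ (b - 1)
      ≤ (t - s + 1) * (1 - x) * (1 - x) ^ (b - 1) := by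
        gcongr
        exact rpow_sub_rpow_le hx0 hx1.le hs hst
    _ = (t - s + 1) * (1 - x) ^ b := by
        rw [mul_assoc, rpow_sub_one h1x.ne', mul_div_cancel₀ _ h1x.ne']

lemma tendsto_rpow_sub_rpow_mul_one_sub_rpow_nhdsGT_zero {s t : ℝ} (hs : 0 < s) (ht : 0 < t)
    (b : ℝ) : Tendsto (fun x : ℝ ↦ (x ^ s - x ^ t) * (1 - x) ^ b) (𝓝[>] 0) (𝓝 0) := by
  have hcont : ContinuousAt (fun x : ℝ ↦ (x ^ s - x ^ t) * (1 - x) ^ b) 0 :=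
    ((continuousAt_rpow_const 0 s (Or.inr hs.le)).sub
      (continuousAt_rpow_const 0 t (Or.inr ht.le))).mul
      ((continuousAt_const.sub continuousAt_id).rpow_const (Or.inl (by norm_num)))
  simpa [zero_rpow hs.ne', zero_rpow ht.ne'] using
    tendsto_nhdsWithin_of_tendsto_nhds hcont.tendsto

lemma tendsto_rpow_sub_rpow_mul_one_sub_rpow_nhdsLT_one {s t b : ℝ} (hs : 0 ≤ s) (hst : s ≤ t)
    (hb : -1 < b) :
    Tendsto (fun x : ℝ ↦ (x ^ s - x ^ t) * (1 - x) ^ b) (𝓝[<] 1) (𝓝 0) := by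
  have hbound : Tendsto (fun x : ℝ ↦ (t - s + 1) * (1 - x) ^ (b + 1)) (𝓝[<] 1) (𝓝 0) := by
    have hcont : ContinuousAt (fun x : ℝ ↦ (t - s + 1) * (1 - x) ^ (b + 1)) 1 :=
      continuousAt_const.mul
        ((continuousAt_const.sub continuousAt_id).rpow_const (Or.inr (by linarith)))
    simpa [zero_rpow (by linarith : b + 1 ≠ 0)] using
      tendsto_nhdsWithin_of_tendsto_nhds hcont.tendsto
  refine squeeze_zero' ?_ ?_ hbound <;>
    filter_upwards [Ioo_mem_nhdsLT zero_lt_one] with x ⟨hx0, hx1⟩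
  · have : 0 ≤ x ^ s - x ^ t := sub_nonneg.2 (rpow_le_rpow_of_exponent_ge hx0 hx1.le hst)
    have : 0 < 1 - x := by linarith
    positivity
  · have h1x : 0 < 1 - x := by linarith
    rw [rpow_add_one h1x.ne', mul_comm ((1 - x) ^ b), ← mul_assoc]
    gcongr
    exact rpow_sub_rpow_le hx0 hx1.le hs hst

lemma integral_rpow_sub_rpow_mul_one_sub_rpow {s t b : ℝ} (hs : 0 < s) (hst : s ≤ t)
    (hb : -1 < b) (hb0 : b ≠ 0) :
    ∫ x in Ioo (0 : ℝ) 1, (x ^ s - x ^ t) * (1 - x) ^ (b - 1) =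
      Gamma b * (Gamma (s + 1) / Gamma (s + b + 1) - Gamma (t + 1) / Gamma (t + b + 1)) := by
  have ht : 0 < t := hs.trans_le hst
  have hbeta_s := integrableOn_rpow_mul_one_sub_rpow (p := s - 1) (q := b + 1 - 1)
    (by linarith) (by linarith)
  have hbeta_t := integrableOn_rpow_mul_one_sub_rpow (p := t - 1) (q := b + 1 - 1)
    (by linarith) (by linarith)
  have hD := integrableOn_rpow_sub_rpow_mul_one_sub_rpow hs.le hst hb
  have hderiv : ∀ x ∈ Ioo (0 : ℝ) 1,
      HasDerivAt (fun x : ℝ ↦ (x ^ s - x ^ t) * (1 - x) ^ b)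
      (s * (x ^ (s - 1) * (1 - x) ^ (b + 1 - 1)) - t * (x ^ (t - 1) * (1 - x) ^ (b + 1 - 1))
        - b * ((x ^ s - x ^ t) * (1 - x) ^ (b - 1))) x := by
    rintro x ⟨hx0, hx1⟩
    have hpow (r : ℝ) : HasDerivAt (fun y : ℝ ↦ y ^ r) (r * x ^ (r - 1)) x :=
      hasDerivAt_rpow_const (Or.inl hx0.ne')
    have hone_sub := ((hasDerivAt_id x).const_sub 1).rpow_const (p := b)
      (Or.inl (by linarith : 1 - x ≠ 0))
    refine (((hpow s).sub (hpow t)).mul hone_sub).congr_deriv ?_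
    simp only [id, Pi.sub_apply, add_sub_cancel_right]
    ring
  have hftc := intervalIntegral.integral_eq_sub_of_hasDerivAt_of_tendsto zero_lt_one hderiv
    ((intervalIntegrable_iff_integrableOn_Ioo_of_le zero_le_one).2
      (((hbeta_s.const_mul s).sub (hbeta_t.const_mul t)).sub (hD.const_mul b)))
    (tendsto_rpow_sub_rpow_mul_one_sub_rpow_nhdsGT_zero hs ht b)
    (tendsto_rpow_sub_rpow_mul_one_sub_rpow_nhdsLT_one hs.le hst hb)
  rw [intervalIntegral.integral_of_le zero_le_one, integral_Ioc_eq_integral_Ioo,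
    integral_sub ?_ (hD.const_mul b), integral_sub (hbeta_s.const_mul s) (hbeta_t.const_mul t),
    integral_const_mul, integral_const_mul, integral_const_mul,
    integral_rpow_mul_one_sub_rpow hs (by linarith),
    integral_rpow_mul_one_sub_rpow ht (by linarith),
    Gamma_add_one hb0, ← add_assoc, ← add_assoc] at hftc
  · rw [Gamma_add_one hs.ne', Gamma_add_one ht.ne']
    apply mul_left_cancel₀ hb0
    linear_combination -hftc
  · exact (hbeta_s.const_mul s).sub (hbeta_t.const_mul t)

section Reflection

variable {E : Type*} [NormedAddCommGroup E]

lemma MeasureTheory.IntegrableOn.comp_one_sub {f : ℝ → E} (hf : IntegrableOn f (Ioo 0 1)) :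
    IntegrableOn (fun x ↦ f (1 - x)) (Ioo 0 1) := by
  have h := ((intervalIntegrable_iff_integrableOn_Ioo_of_le zero_le_one).2 hf).comp_sub_left 1
  rw [sub_zero, sub_self] at h
  exact (intervalIntegrable_iff_integrableOn_Ioo_of_le zero_le_one).1 h.symm

lemma integral_Ioo_comp_one_sub [NormedSpace ℝ E] (f : ℝ → E) :
    ∫ x in Ioo (0 : ℝ) 1, f (1 - x) = ∫ x in Ioo (0 : ℝ) 1, f x := by
  simpa [intervalIntegral.integral_of_le, integral_Ioc_eq_integral_Ioo] using
    intervalIntegral.integral_comp_sub_left f (a := 0) (b := 1) 1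

end Reflection

lemma cfun_add_cfun_one_sub (x : ℝ) : cfun x + cfun (1 - x) = 1 := by
  unfold cfun; ring

-- The exponents are kept in the form `b - 1` of `integral_rpow_sub_rpow_mul_one_sub_rpow`.
lemma one_sub_rpow_mul_cfun_eq {α x : ℝ} (hx0 : 0 < x) (hx1 : x < 1) :
    (1 - x ^ α) * cfun x * (x * (1 - x)) ^ (-(3 / 2) : ℝ) =
      (x ^ (1 / 2 : ℝ) - x ^ (1 / 2 + α)) * (1 - x) ^ (-(1 / 2) - 1 : ℝ) +
        2 * ((x ^ (1 / 2 : ℝ) - x ^ (1 / 2 + α)) * (1 - x) ^ (1 / 2 - 1 : ℝ)) := by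
  have h1x : 0 < 1 - x := by linarith
  have hx : x ^ 2 * x ^ (-(3 / 2) : ℝ) = x ^ (1 / 2 : ℝ) := by
    rw [← rpow_natCast, ← rpow_add hx0]; norm_num
  have hα : x ^ α * x ^ (1 / 2 : ℝ) = x ^ (1 / 2 + α) := by rw [← rpow_add hx0, add_comm]
  have h1 : (1 - x) ^ (1 / 2 - 1 : ℝ) = (1 - x) * (1 - x) ^ (-(3 / 2) : ℝ) := by
    rw [← rpow_one_add' h1x.le (by norm_num)]; norm_num
  rw [show (-(1 / 2) - 1 : ℝ) = -(3 / 2) by norm_num, mul_rpow hx0.le h1x.le, h1, ← hα, ← hx,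
    cfun]
  ring

lemma integrableOn_one_sub_rpow_mul_cfun {α : ℝ} (hα : 0 ≤ α) :
    IntegrableOn (fun x : ℝ ↦ (1 - x ^ α) * cfun x * (x * (1 - x)) ^ (-(3 / 2) : ℝ))
      (Ioo 0 1) := by
  have hD (b : ℝ) (hb : -1 < b) :=
    integrableOn_rpow_sub_rpow_mul_one_sub_rpow (s := 1 / 2) (t := 1 / 2 + α) (by norm_num)
      (by linarith) hb
  exact ((hD _ (by norm_num)).add ((hD _ (by norm_num)).const_mul 2)).congr_fun
    (fun x hx ↦ (one_sub_rpow_mul_cfun_eq hx.1 hx.2).symm) measurableSet_Ioo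

lemma integral_one_sub_rpow_mul_cfun {α : ℝ} (hα : 0 ≤ α) :
    ∫ x in Ioo (0 : ℝ) 1, (1 - x ^ α) * cfun x * (x * (1 - x)) ^ (-(3 / 2) : ℝ) =
      2 * √π * α * Gamma (3 / 2 + α) / Gamma (2 + α) := by
  have hD (b : ℝ) (hb : -1 < b) :=
    integrableOn_rpow_sub_rpow_mul_one_sub_rpow (s := 1 / 2) (t := 1 / 2 + α) (by norm_num)
      (by linarith) hb
  have hI (b : ℝ) (hb : -1 < b) (hb0 : b ≠ 0) :=
    integral_rpow_sub_rpow_mul_one_sub_rpow (s := 1 / 2) (t := 1 / 2 + α) (by norm_num)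
      (by linarith) hb hb0
  rw [setIntegral_congr_fun measurableSet_Ioo fun x hx ↦ one_sub_rpow_mul_cfun_eq hx.1 hx.2,
    integral_add (hD _ (by norm_num)) ((hD _ (by norm_num)).const_mul 2), integral_const_mul,
    hI _ (by norm_num) (by norm_num), hI _ (by norm_num) (by norm_num)]
  have hΓneg : Gamma (-(1 / 2)) = -2 * √π := by
    have h := Gamma_add_one (s := -(1 / 2)) (by norm_num)
    rw [show -(1 / 2 : ℝ) + 1 = 1 / 2 by norm_num, Gamma_one_half_eq] at h
    linarith
  have hΓ32 : Gamma (1 / 2 + 1) = √π / 2 := by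
    rw [Gamma_add_one (by norm_num), Gamma_one_half_eq]; ring
  have hΓ2 : Gamma (2 + α) = (1 + α) * Gamma (1 + α) := by
    rw [show 2 + α = (1 + α) + 1 by ring, Gamma_add_one (by linarith)]
  rw [show (1 / 2 : ℝ) + -(1 / 2) + 1 = 1 by norm_num,
    show (1 / 2 : ℝ) + 1 / 2 + 1 = 2 by norm_num,
    show 1 / 2 + α + 1 = 3 / 2 + α by ring, show 1 / 2 + α + -(1 / 2) + 1 = 1 + α by ring,
    show 1 / 2 + α + 1 / 2 + 1 = 2 + α by ring, hΓneg, hΓ32, hΓ2, Gamma_one_half_eq, Gamma_one,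
    Gamma_two]
  field_simp
  ring

theorem integral_Phi (α : ℝ) (hα : 0 ≤ α) :
    (1 / Real.sqrt (2 * π)) *
        ∫ x in Set.Ioo (0 : ℝ) 1,
          (1 - x ^ α * cfun x - (1 - x) ^ α * cfun (1 - x)) *
            (x * (1 - x)) ^ (-(3 / 2) : ℝ) =
      2 * Real.sqrt 2 * α * Real.Gamma (3 / 2 + α) / Real.Gamma (2 + α) := by
  set g : ℝ → ℝ := fun x ↦ (1 - x ^ α) * cfun x * (x * (1 - x)) ^ (-(3 / 2) : ℝ)
  have hg : IntegrableOn g (Ioo 0 1) := integrableOn_one_sub_rpow_mul_cfun hα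
  have hsymm : ∀ x, (1 - x ^ α * cfun x - (1 - x) ^ α * cfun (1 - x)) *
      (x * (1 - x)) ^ (-(3 / 2) : ℝ) = g x + g (1 - x) := by
    intro x
    simp only [g, sub_sub_cancel, mul_comm (1 - x) x]
    linear_combination -(x * (1 - x)) ^ (-(3 / 2) : ℝ) * cfun_add_cfun_one_sub x
  simp_rw [hsymm]
  rw [integral_add hg hg.comp_one_sub, integral_Ioo_comp_one_sub g,
    integral_one_sub_rpow_mul_cfun hα, sqrt_mul zero_le_two]
  field_simp
  rw [sq_sqrt zero_le_two]
  ring
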